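/- The rational function c₊ transforms under a simple reflection s_i (1 ≤ i ≤ n) by (s_i c₊)(x) = c₊(x)·c_{-a_i}(-x)/c_{a_i}(-x), where c_{a_i} is the local c-function attached to the simple root a_i. -/

import Mathlib

/-!
Write c₊ as a product of one factor for each pair j < k (the positive roots e_j ± e_k) and one
factor for each j. A simple reflection permutes these factors except for the one attached to the
simple root it reflects: swapping the adjacent coordinates i, i+1 preserves the order of every pair
other than (i, i+1), and negating the last coordinate leaves every pair factor unchanged since it
is even in x_k. So s_i c₊ / c₊ is the ratio of the two values of that single factor.
-/

noncomputable section

def cplus (n : ℕ) (a b t : ℂ) (x : Fin n → ℂ) : ℂ :=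
  (∏ j, ∏ k ∈ Finset.Ioi j,
      ((t - x j + x k) * (t - x j - x k)) / ((x k + x j) * (x k - x j))) *
    ∏ j, ((a - x j) * (b - x j)) / (-2 * x j)

open Finset Function

section PairProducts

variable {ι M : Type*} [CommMonoid M]

lemma prod_comp_update_of_eq_mul {α : Type*} [Fintype ι] [DecidableEq ι] (g : α → M) (x : ι → α)
    (m : ι) {w : α} {c : M} (h : g w = g (x m) * c) :
    ∏ k, g (update x m w k) = (∏ k, g (x k)) * c := by
  simp only [apply_update (fun _ => g), prod_update_of_mem (mem_univ m), h,
    ← mul_prod_erase univ (fun k => g (x k)) (mem_univ m), sdiff_singleton_eq_erase]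
  ac_rfl

variable [LinearOrder ι] {i j p q : ι}

lemma swap_apply_lt_swap_apply_of_covBy (hij : i ⋖ j) (hpq : p < q) (hne : (p, q) ≠ (i, j)) :
    Equiv.swap i j p < Equiv.swap i j q := by
  have hlt := hij.lt
  have hbetween := hij.2
  rw [Equiv.swap_apply_def, Equiv.swap_apply_def]
  split_ifs <;> grind [not_lt, lt_of_le_of_ne]

variable [Fintype ι] [LocallyFiniteOrderTop ι]

lemma prod_Ioi_eq_prod_filter_lt (F : ι → ι → M) :
    ∏ p, ∏ q ∈ Ioi p, F p q = ∏ r ∈ univ.filter (fun r : ι × ι => r.1 < r.2), F r.1 r.2 :=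
  (prod_finset_product' _ _ _ (by simp)).symm

lemma prod_Ioi_comp_swap_of_covBy (F : ι → ι → M) (hij : i ⋖ j) {c : M}
    (h : F j i = F i j * c) :
    ∏ p, ∏ q ∈ Ioi p, F (Equiv.swap i j p) (Equiv.swap i j q) = (∏ p, ∏ q ∈ Ioi p, F p q) * c := by
  set σ := Equiv.swap i j
  set P := univ.filter (fun r : ι × ι => r.1 < r.2)
  have hij_mem : (i, j) ∈ P := by simp [P, hij.lt]
  have hmaps : ∀ r ∈ P.erase (i, j), Equiv.prodCongr σ σ r ∈ P.erase (i, j) := by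
    rintro ⟨p, q⟩ hr
    simp only [P, mem_erase, mem_filter, mem_univ, true_and] at hr ⊢
    refine ⟨fun h => ?_, swap_apply_lt_swap_apply_of_covBy hij hr.2 hr.1⟩
    simp only [Equiv.prodCongr_apply, Prod.map, Prod.mk.injEq, σ, Equiv.swap_apply_eq_iff,
      Equiv.swap_apply_left, Equiv.swap_apply_right] at h
    exact hr.2.not_gt (h.1 ▸ h.2 ▸ hij.lt)
  have hinv : ∀ r, Equiv.prodCongr σ σ (Equiv.prodCongr σ σ r) = r := by
    rintro ⟨p, q⟩
    simp [σ]
  have hrest : ∏ r ∈ P.erase (i, j), F (σ r.1) (σ r.2) = ∏ r ∈ P.erase (i, j), F r.1 r.2 :=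
    prod_equiv (Equiv.prodCongr σ σ)
      (fun r => ⟨hmaps r, fun hr => hinv r ▸ hmaps _ hr⟩) (fun _ _ => rfl)
  rw [prod_Ioi_eq_prod_filter_lt, prod_Ioi_eq_prod_filter_lt, ← mul_prod_erase _ _ hij_mem,
    ← mul_prod_erase _ _ hij_mem, hrest]
  simp only [σ, Equiv.swap_apply_left, Equiv.swap_apply_right, h]
  ac_rfl

lemma prod_Ioi_comp_update_of_isTop {α : Type*} (F : α → α → M) (x : ι → α) {m : ι}
    (hm : IsTop m) {w : α} (hF : ∀ u, F u w = F u (x m)) :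
    ∏ p, ∏ q ∈ Ioi p, F (update x m w p) (update x m w q) = ∏ p, ∏ q ∈ Ioi p, F (x p) (x q) := by
  refine prod_congr rfl fun p _ => prod_congr rfl fun q hq => ?_
  rw [update_of_ne ((mem_Ioi.1 hq).trans_le (hm q)).ne]
  rcases eq_or_ne q m with rfl | hqm
  · rw [update_self, hF]
  · rw [update_of_ne hqm]

end PairProducts

def cplusPairFactor (t u v : ℂ) : ℂ := ((t - u + v) * (t - u - v)) / ((v + u) * (v - u))

def cplusSingleFactor (a b u : ℂ) : ℂ := ((a - u) * (b - u)) / (-2 * u)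

lemma cplus_eq_prod (n : ℕ) (a b t : ℂ) (x : Fin n → ℂ) :
    cplus n a b t x = (∏ p, ∏ q ∈ Ioi p, cplusPairFactor t (x p) (x q)) *
      ∏ k, cplusSingleFactor a b (x k) :=
  rfl

lemma cplusPairFactor_neg_right (t u v : ℂ) :
    cplusPairFactor t u (-v) = cplusPairFactor t u v := by
  unfold cplusPairFactor
  congr 1 <;> ring

lemma cplusPairFactor_swap {t u v : ℂ} (ht : t - u + v ≠ 0) (huv : u ^ 2 ≠ v ^ 2) :
    cplusPairFactor t v u =
      cplusPairFactor t u v * ((t + u - v) / (u - v) / ((t - u + v) / (v - u))) := by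
  have hsub : u - v ≠ 0 := fun h => huv (by rw [sub_eq_zero.1 h])
  have hadd : u + v ≠ 0 := fun h => huv (by rw [eq_neg_of_add_eq_zero_left h, neg_sq])
  have hsub' : v - u ≠ 0 := fun h => hsub (by linear_combination -h)
  have hadd' : v + u ≠ 0 := by rwa [add_comm]
  unfold cplusPairFactor
  field_simp
  ring

lemma cplusSingleFactor_neg {a b u : ℂ} (hu : u ≠ 0) (hab : (a - u) * (b - u) ≠ 0) :
    cplusSingleFactor a b (-u) = cplusSingleFactor a b u *
      ((a + u) * (b + u) / (2 * u) / ((a - u) * (b - u) / (-2 * u))) := by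
  have hc : (a - u) * (b - u) / (-2 * u) ≠ 0 := div_ne_zero hab (by simpa using hu)
  unfold cplusSingleFactor
  rw [mul_div_cancel₀ _ hc]
  ring

/-- (s_i c₊)(x) = c₊(x) · c_{-a_i}(-x)/c_{a_i}(-x): for middle simple roots
(s_i swapping x_i, x_{i+1}, c_{a_i}(x) = (t + x_i − x_{i+1})/(x_i − x_{i+1})) and for the
last simple root (sₙ negating xₙ, c_{aₙ}(x) = (a + xₙ)(b + xₙ)/(2xₙ)); here c_{-α}(x) = c_α(−x). -/
theorem stmt14 (n : ℕ) (hn : 0 < n) (a b t : ℂ) (x : Fin n → ℂ)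
    (hx0 : ∀ j, x j ≠ 0) (hx1 : ∀ j k : Fin n, j ≠ k → (x j) ^ 2 ≠ (x k) ^ 2) :
    (∀ i j : Fin n, (i : ℕ) + 1 = (j : ℕ) → (t - x i + x j ≠ 0) →
      cplus n a b t (x ∘ Equiv.swap i j)
        = cplus n a b t x * ((t + x i - x j) / (x i - x j))
            / ((t - x i + x j) / (x j - x i))) ∧
    ((a - x ⟨n - 1, by omega⟩) * (b - x ⟨n - 1, by omega⟩) ≠ 0 →
      cplus n a b t (Function.update x ⟨n - 1, by omega⟩ (-(x ⟨n - 1, by omega⟩)))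
        = cplus n a b t x
            * ((a + x ⟨n - 1, by omega⟩) * (b + x ⟨n - 1, by omega⟩) / (2 * x ⟨n - 1, by omega⟩))
            / ((a - x ⟨n - 1, by omega⟩) * (b - x ⟨n - 1, by omega⟩)
                / (-2 * x ⟨n - 1, by omega⟩))) := by
  refine ⟨fun i j hij ht => ?_, fun hab => ?_⟩
  · have hcov : i ⋖ j := Fin.covBy_iff.2 (Nat.covBy_iff_add_one_eq.2 hij)
    rw [cplus_eq_prod, cplus_eq_prod, comp_def,
      prod_Ioi_comp_swap_of_covBy (fun p q => cplusPairFactor t (x p) (x q)) hcov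
        (cplusPairFactor_swap ht (hx1 i j hcov.ne)),
      Equiv.prod_comp (Equiv.swap i j) (fun k => cplusSingleFactor a b (x k))]
    ring
  · set m : Fin n := ⟨n - 1, by omega⟩
    have hm : IsTop m := fun k => Fin.le_def.2 (Nat.le_sub_one_of_lt k.isLt)
    rw [cplus_eq_prod, cplus_eq_prod,
      prod_Ioi_comp_update_of_isTop _ x hm (fun u => cplusPairFactor_neg_right t u _),
      prod_comp_update_of_eq_mul _ x m (cplusSingleFactor_neg (hx0 m) hab)]
    ring
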